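/- arXiv:1405.3126 — 4 statements merged into one kernel-verified Lean document; each statement's English description precedes it below -/
import Mathlib

section
/- Let p and p̃ be design measures on the design points x_1, …, x_n ∈ ℝ^q with both H(p) and H(p̃) positive definite, and let t ∈ [0,1). Then for every 0 < ε < 1, log det H((1−ε)p + εp̃) ≥ (1−ε)·log det H(p) + ε·log det H(p̃); that is, the D-criterion φ_D(p) = log det H(p) is concave in the design measure p. -/
/-!
Mixing design measures mixes `g` and `G` linearly, so that
`H((1-ε)p + εp̃) = (1-ε)H(p) + εH(p̃) + ε(1-ε)t (g(p) - g(p̃))(g(p) - g(p̃))ᵀ`.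
The last term is positive semidefinite because `t ≥ 0`, and `det` is monotone under adding a
positive semidefinite matrix to a positive definite one, so the claim reduces to the concavity of
`log det` on positive definite matrices. Both facts follow by congruence with `A^{-1/2}`:
`det (aA + bB) = det A · ∏ᵢ (a + b μᵢ)`, where the `μᵢ` are the eigenvalues of `A^{-1/2} B A^{-1/2}`,
and the concavity of `log` on `(0, ∞)`.
-/

open Matrix BigOperators Finset

noncomputable section

/-- A design measure: nonnegative masses summing to 1. -/
def designMeasure {n : ℕ} (p : Fin n → ℝ) : Prop :=
  (∀ i, 0 ≤ p i) ∧ ∑ i, p i = 1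

/-- G(p) = Σ pᵢ xᵢ xᵢᵀ. -/
def Gmat {q n : ℕ} (x : Fin n → Fin q → ℝ) (p : Fin n → ℝ) : Matrix (Fin q) (Fin q) ℝ :=
  ∑ i, p i • Matrix.vecMulVec (x i) (x i)

/-- g(p) = Σ pᵢ xᵢ. -/
def gvec {q n : ℕ} (x : Fin n → Fin q → ℝ) (p : Fin n → ℝ) : Fin q → ℝ :=
  ∑ i, p i • x i

/-- H(p) = G(p) − t g(p) g(p)ᵀ. -/
def Hmat {q n : ℕ} (t : ℝ) (x : Fin n → Fin q → ℝ) (p : Fin n → ℝ) : Matrix (Fin q) (Fin q) ℝ :=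
  Gmat x p - t • Matrix.vecMulVec (gvec x p) (gvec x p)

/-- ψ_{Di}(p). -/
def psiD {q n : ℕ} (t : ℝ) (x : Fin n → Fin q → ℝ) (p : Fin n → ℝ) (i : Fin n) : ℝ :=
  (1 - t) * (x i ⬝ᵥ ((Hmat t x p)⁻¹ *ᵥ x i))
    + t * ((x i - gvec x p) ⬝ᵥ ((Hmat t x p)⁻¹ *ᵥ (x i - gvec x p)))

/-- ψ_{Ai}(p). -/
def psiA {q n : ℕ} (t : ℝ) (x : Fin n → Fin q → ℝ) (p : Fin n → ℝ) (i : Fin n) : ℝ :=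
  (1 - t) * (x i ⬝ᵥ (((Hmat t x p)⁻¹ * (Hmat t x p)⁻¹) *ᵥ x i))
    + t * ((x i - gvec x p) ⬝ᵥ (((Hmat t x p)⁻¹ * (Hmat t x p)⁻¹) *ᵥ (x i - gvec x p)))

end

open scoped MatrixOrder

namespace Matrix

lemma convex_posDef {m : Type*} : Convex ℝ {A : Matrix m m ℝ | A.PosDef} := by
  intro A hA B hB a b ha hb hab
  rcases ha.eq_or_lt with rfl | ha
  · simpa [show b = 1 by linarith] using hB
  · exact (hA.smul ha).add_posSemidef (hB.posSemidef.smul hb)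

variable {m : Type*} [Fintype m] [DecidableEq m]

lemma IsHermitian.det_smul_one_add_smul {M : Matrix m m ℝ} (hM : M.IsHermitian) (a b : ℝ) :
    (a • (1 : Matrix m m ℝ) + b • M).det = ∏ i, (a + b * hM.eigenvalues i) := by
  have hcfc : a • (1 : Matrix m m ℝ) + b • M = cfc (fun x => a + b * x) M := by
    rw [cfc_add .., cfc_const_mul .., cfc_id' .., cfc_const ..]
    simp [Algebra.algebraMap_eq_smul_one]
  rw [hcfc, hM.cfc_eq]
  simp [IsHermitian.cfc, -Unitary.conjStarAlgAut_apply]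

lemma PosDef.det_smul_add_smul {A : Matrix m m ℝ} (hA : A.PosDef) (B : Matrix m m ℝ) (a b : ℝ) :
    (a • A + b • B).det
      = A.det * (a • (1 : Matrix m m ℝ) + b • ((CFC.sqrt A)⁻¹ * B * (CFC.sqrt A)⁻¹)).det := by
  set S := CFC.sqrt A
  have hSS : S * S = A := CFC.sqrt_mul_sqrt_self A hA.posSemidef.nonneg
  have hS : IsUnit S.det :=
    (isUnit_iff_isUnit_det S).1 (CFC.isUnit_sqrt_iff_isStrictlyPositive.2 hA.isStrictlyPositive)
  have hcongr : a • A + b • B = S * (a • 1 + b • (S⁻¹ * B * S⁻¹)) * S := by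
    simp only [Matrix.mul_add, Matrix.add_mul, Matrix.mul_smul, Matrix.smul_mul, Matrix.mul_one,
      hSS, ← Matrix.mul_assoc, mul_nonsing_inv S hS, Matrix.one_mul]
    rw [Matrix.mul_assoc _ S⁻¹, nonsing_inv_mul S hS, Matrix.mul_one]
  rw [hcongr, det_mul, det_mul, ← hSS, det_mul]
  ring

lemma conjTranspose_inv_sqrt (A : Matrix m m ℝ) : ((CFC.sqrt A)⁻¹)ᴴ = (CFC.sqrt A)⁻¹ :=
  (CFC.sqrt_nonneg A).posSemidef.inv.isHermitian.eq

lemma PosSemidef.inv_sqrt_mul_mul_inv_sqrt (A : Matrix m m ℝ) {B : Matrix m m ℝ}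
    (hB : B.PosSemidef) : ((CFC.sqrt A)⁻¹ * B * (CFC.sqrt A)⁻¹).PosSemidef := by
  simpa only [conjTranspose_inv_sqrt] using hB.conjTranspose_mul_mul_same (CFC.sqrt A)⁻¹

lemma PosDef.inv_sqrt_mul_mul_inv_sqrt {A B : Matrix m m ℝ} (hA : A.PosDef) (hB : B.PosDef) :
    ((CFC.sqrt A)⁻¹ * B * (CFC.sqrt A)⁻¹).PosDef := by
  have hS : IsUnit (CFC.sqrt A)⁻¹ := by
    simpa using CFC.isUnit_sqrt_iff_isStrictlyPositive.2 hA.isStrictlyPositive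
  simpa only [conjTranspose_inv_sqrt] using
    hB.conjTranspose_mul_mul_same (mulVec_injective_of_isUnit hS)

lemma PosDef.det_le_det_add {A P : Matrix m m ℝ} (hA : A.PosDef) (hP : P.PosSemidef) :
    A.det ≤ (A + P).det := by
  have hM := hP.inv_sqrt_mul_mul_inv_sqrt A
  have hprod : 1 ≤ ∏ i, (1 + 1 * hM.1.eigenvalues i) :=
    Finset.one_le_prod fun i _ => by linarith [hM.eigenvalues_nonneg i]
  rw [← one_smul ℝ A, ← one_smul ℝ P, hA.det_smul_add_smul, one_smul,
    hM.1.det_smul_one_add_smul]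
  exact le_mul_of_one_le_right hA.det_pos.le hprod

theorem concaveOn_log_det : ConcaveOn ℝ {A : Matrix m m ℝ | A.PosDef} (fun A => Real.log A.det) := by
  refine ⟨convex_posDef, fun A hA B hB a b ha hb hab => ?_⟩
  have hM : ((CFC.sqrt A)⁻¹ * B * (CFC.sqrt A)⁻¹).PosDef := hA.inv_sqrt_mul_mul_inv_sqrt hB
  set μ := hM.1.eigenvalues
  have hdet (c d : ℝ) : (c • A + d • B).det = A.det * ∏ i, (c + d * μ i) := by
    rw [hA.det_smul_add_smul, hM.1.det_smul_one_add_smul]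
  have hμ (i : m) : 0 < μ i := hM.eigenvalues_pos i
  have hmix (i : m) : 0 < a + b * μ i := by
    simpa using (convex_Ioi (0 : ℝ)) (Set.mem_Ioi.2 one_pos) (hμ i) ha hb hab
  have hlog (i : m) : b * Real.log (μ i) ≤ Real.log (a + b * μ i) := by
    simpa using strictConcaveOn_log_Ioi.concaveOn.2 (Set.mem_Ioi.2 one_pos) (hμ i) ha hb hab
  have hdetB : B.det = A.det * ∏ i, μ i := by simpa using hdet 0 1
  simp only [smul_eq_mul]
  rw [hdet, hdetB, Real.log_mul hA.det_pos.ne' (Finset.prod_pos fun i _ => hmix i).ne',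
    Real.log_mul hA.det_pos.ne' (Finset.prod_pos fun i _ => hμ i).ne',
    Real.log_prod fun i _ => (hmix i).ne', Real.log_prod fun i _ => (hμ i).ne']
  calc a * Real.log A.det + b * (Real.log A.det + ∑ i, Real.log (μ i))
      = Real.log A.det + ∑ i, b * Real.log (μ i) := by
        rw [← Finset.mul_sum]
        linear_combination Real.log A.det * hab
    _ ≤ Real.log A.det + ∑ i, Real.log (a + b * μ i) := by
        gcongr with i
        exact hlog i

end Matrix

section Design

variable {q n : ℕ} (x : Fin n → Fin q → ℝ)

lemma gvec_smul_add_smul (a b : ℝ) (p p' : Fin n → ℝ) :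
    gvec x (a • p + b • p') = a • gvec x p + b • gvec x p' := by
  simp only [gvec, Pi.add_apply, Pi.smul_apply, smul_eq_mul, add_smul, mul_smul,
    Finset.sum_add_distrib, Finset.smul_sum]

lemma Gmat_smul_add_smul (a b : ℝ) (p p' : Fin n → ℝ) :
    Gmat x (a • p + b • p') = a • Gmat x p + b • Gmat x p' := by
  simp only [Gmat, Pi.add_apply, Pi.smul_apply, smul_eq_mul, add_smul, mul_smul,
    Finset.sum_add_distrib, Finset.smul_sum]

lemma Hmat_smul_add_smul (t : ℝ) {a b : ℝ} (hab : a + b = 1) (p p' : Fin n → ℝ) :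
    Hmat t x (a • p + b • p')
      = (a • Hmat t x p + b • Hmat t x p')
        + (a * b * t) • vecMulVec (gvec x p - gvec x p') (gvec x p - gvec x p') := by
  obtain rfl : a = 1 - b := by linarith
  ext i j
  simp only [Hmat, gvec_smul_add_smul, Gmat_smul_add_smul, Matrix.add_apply, Matrix.sub_apply,
    Matrix.smul_apply, vecMulVec_apply, Pi.add_apply, Pi.sub_apply, Pi.smul_apply, smul_eq_mul]
  ring

end Design

theorem statement_1_general {q n : ℕ}
    (x : Fin n → Fin q → ℝ) (t : ℝ) (ht0 : 0 ≤ t)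
    (p ptilde : Fin n → ℝ)
    (hHp : (Hmat t x p).PosDef) (hHpt : (Hmat t x ptilde).PosDef)
    (ε : ℝ) (hε0 : 0 < ε) (hε1 : ε < 1) :
    Real.log (Hmat t x ((1 - ε) • p + ε • ptilde)).det
      ≥ (1 - ε) * Real.log (Hmat t x p).det + ε * Real.log (Hmat t x ptilde).det := by
  set v := gvec x p - gvec x ptilde
  have hmix : ((1 - ε) • Hmat t x p + ε • Hmat t x ptilde).PosDef :=
    convex_posDef hHp hHpt (by linarith) hε0.le (by ring)
  have hcorr : (((1 - ε) * ε * t) • vecMulVec v v).PosSemidef := by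
    simpa using (posSemidef_vecMulVec_self_star v).smul
      (mul_nonneg (mul_nonneg (by linarith) hε0.le) ht0)
  rw [Hmat_smul_add_smul x t (sub_add_cancel 1 ε)]
  calc (1 - ε) * Real.log (Hmat t x p).det + ε * Real.log (Hmat t x ptilde).det
      ≤ Real.log ((1 - ε) • Hmat t x p + ε • Hmat t x ptilde).det :=
        concaveOn_log_det.2 hHp hHpt (by linarith) hε0.le (by ring)
    _ ≤ _ := Real.log_le_log hmix.det_pos (hmix.det_le_det_add hcorr)

theorem statement_1 {q n : ℕ} (hq : 1 ≤ q) (hn : 1 ≤ n)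
    (x : Fin n → Fin q → ℝ) (t : ℝ) (ht0 : 0 ≤ t) (ht1 : t < 1)
    (p ptilde : Fin n → ℝ) (hp : designMeasure p) (hpt : designMeasure ptilde)
    (hHp : (Hmat t x p).PosDef) (hHpt : (Hmat t x ptilde).PosDef)
    (ε : ℝ) (hε0 : 0 < ε) (hε1 : ε < 1) :
    Real.log (Hmat t x ((1 - ε) • p + ε • ptilde)).det
      ≥ (1 - ε) * Real.log (Hmat t x p).det + ε * Real.log (Hmat t x ptilde).det :=
  statement_1_general x t ht0 p ptilde hHp hHpt ε hε0 hε1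
end

section
/- Let p and p̃ be design measures on the design points x_1, …, x_n ∈ ℝ^q with both H(p) and H(p̃) positive definite, and let t ∈ [0,1). Then for every 0 < ε < 1, −tr{H((1−ε)p + εp̃)}⁻¹ ≥ (1−ε)·(−tr{H(p)}⁻¹) + ε·(−tr{H(p̃)}⁻¹); that is, the A-criterion φ_A(p) = −tr{H(p)}⁻¹ is concave in the design measure p. -/
open Matrix BigOperators Finset

/-!
As a function of the design, `H` is concave in the Loewner order: `G` and `g` are linear in `p`, and
`H((1-ε)p + εp̃) - ((1-ε)H(p) + εH(p̃)) = tε(1-ε)(g(p) - g(p̃))(g(p) - g(p̃))ᵀ ⪰ 0`.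
On positive definite matrices, inversion is antitone and convex; both follow from the variational
formula `vᵀX⁻¹v = max_u (2uᵀv - uᵀXu)`, attained at `u = X⁻¹v`. Hence
`H((1-ε)p + εp̃)⁻¹ ⪯ (1-ε)H(p)⁻¹ + εH(p̃)⁻¹`, and the trace is monotone.
-/

open scoped MatrixOrder

namespace Matrix

variable {m : Type*}

lemma PosDef.convexComb {A B : Matrix m m ℝ} (hA : A.PosDef) (hB : B.PosDef) {a b : ℝ}
    (ha : 0 ≤ a) (hb : 0 ≤ b) (hab : a + b = 1) : (a • A + b • B).PosDef := by
  rcases ha.eq_or_lt with rfl | ha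
  · obtain rfl : b = 1 := by linarith
    simpa using hB
  · exact (hA.smul ha).add_posSemidef (hB.posSemidef.smul hb)

variable [Fintype m]

lemma mulVec_nonsing_inv_mulVec {R : Type*} [CommRing R] [DecidableEq m] {X : Matrix m m R}
    (hX : IsUnit X.det) (v : m → R) : X *ᵥ (X⁻¹ *ᵥ v) = v := by
  rw [mulVec_mulVec, mul_nonsing_inv _ hX, one_mulVec]

lemma IsHermitian.dotProduct_mulVec_comm {X : Matrix m m ℝ} (hX : X.IsHermitian)
    (u w : m → ℝ) : w ⬝ᵥ (X *ᵥ u) = u ⬝ᵥ (X *ᵥ w) := by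
  rw [dotProduct_mulVec, ← mulVec_transpose, ← conjTranspose_eq_transpose_of_trivial,
    hX.eq, dotProduct_comm]

lemma PosDef.two_mul_dotProduct_sub_le_dotProduct_inv_mulVec [DecidableEq m] {X : Matrix m m ℝ}
    (hX : X.PosDef) (u v : m → ℝ) :
    2 * (u ⬝ᵥ v) - u ⬝ᵥ (X *ᵥ u) ≤ v ⬝ᵥ (X⁻¹ *ᵥ v) := by
  set w := X⁻¹ *ᵥ v
  have hXw : X *ᵥ w = v := mulVec_nonsing_inv_mulVec hX.det_pos.ne'.isUnit v
  have hsq : 0 ≤ (u - w) ⬝ᵥ (X *ᵥ (u - w)) := by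
    simpa using hX.posSemidef.dotProduct_mulVec_nonneg (u - w)
  have hwu : w ⬝ᵥ (X *ᵥ u) = u ⬝ᵥ v := by rw [hX.isHermitian.dotProduct_mulVec_comm, hXw]
  rw [mulVec_sub, hXw, sub_dotProduct, dotProduct_sub, dotProduct_sub, hwu] at hsq
  linarith [dotProduct_comm w v]

lemma posSemidef_of_dotProduct_mulVec_nonneg {X : Matrix m m ℝ} (hX : X.IsHermitian)
    (h : ∀ v, 0 ≤ v ⬝ᵥ (X *ᵥ v)) : X.PosSemidef :=
  posSemidef_iff_dotProduct_mulVec.mpr ⟨hX, fun v => by simpa using h v⟩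

lemma PosDef.inv_le_inv_of_le [DecidableEq m] {M N : Matrix m m ℝ} (hN : N.PosDef)
    (hNM : N ≤ M) : M⁻¹ ≤ N⁻¹ := by
  have hM : M.PosDef := by simpa using hN.add_posSemidef hNM
  refine posSemidef_of_dotProduct_mulVec_nonneg (hN.isHermitian.inv.sub hM.isHermitian.inv)
    fun v => ?_
  set u := M⁻¹ *ᵥ v
  have hMu : M *ᵥ u = v := mulVec_nonsing_inv_mulVec hM.det_pos.ne'.isUnit v
  have hquad := hNM.dotProduct_mulVec_nonneg u
  have hvar := hN.two_mul_dotProduct_sub_le_dotProduct_inv_mulVec u v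
  simp only [star_trivial, sub_mulVec, dotProduct_sub, hMu] at hquad ⊢
  linarith [dotProduct_comm u v]

lemma PosDef.inv_convexComb_le [DecidableEq m] {A B : Matrix m m ℝ} (hA : A.PosDef)
    (hB : B.PosDef) {a b : ℝ} (ha : 0 ≤ a) (hb : 0 ≤ b) (hab : a + b = 1) :
    (a • A + b • B)⁻¹ ≤ a • A⁻¹ + b • B⁻¹ := by
  have hN := hA.convexComb hB ha hb hab
  refine posSemidef_of_dotProduct_mulVec_nonneg
    (((hA.isHermitian.inv.smul (.all a)).add (hB.isHermitian.inv.smul (.all b))).sub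
      hN.isHermitian.inv) fun v => ?_
  set u := (a • A + b • B)⁻¹ *ᵥ v
  have hNu : (a • A + b • B) *ᵥ u = v := mulVec_nonsing_inv_mulVec hN.det_pos.ne'.isUnit v
  have hvarA := hA.two_mul_dotProduct_sub_le_dotProduct_inv_mulVec u v
  have hvarB := hB.two_mul_dotProduct_sub_le_dotProduct_inv_mulVec u v
  have huv : a * (u ⬝ᵥ (A *ᵥ u)) + b * (u ⬝ᵥ (B *ᵥ u)) = u ⬝ᵥ v := by
    rw [← hNu, add_mulVec, smul_mulVec, smul_mulVec, dotProduct_add, dotProduct_smul,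
      dotProduct_smul, smul_eq_mul, smul_eq_mul]
  simp only [sub_mulVec, add_mulVec, smul_mulVec, dotProduct_sub, dotProduct_add,
    dotProduct_smul, smul_eq_mul]
  rw [dotProduct_comm v u]
  linear_combination a * hvarA + b * hvarB - 2 * (u ⬝ᵥ v) * hab + huv

end Matrix

section Design

variable {q n : ℕ} (x : Fin n → Fin q → ℝ)

lemma gvec_add (p p' : Fin n → ℝ) : gvec x (p + p') = gvec x p + gvec x p' := by
  simp only [gvec, Pi.add_apply, add_smul, sum_add_distrib]

lemma gvec_smul (c : ℝ) (p : Fin n → ℝ) : gvec x (c • p) = c • gvec x p := by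
  simp only [gvec, Pi.smul_apply, smul_sum, smul_smul, smul_eq_mul]

lemma Gmat_add (p p' : Fin n → ℝ) : Gmat x (p + p') = Gmat x p + Gmat x p' := by
  simp only [Gmat, Pi.add_apply, add_smul, sum_add_distrib]

lemma Gmat_smul (c : ℝ) (p : Fin n → ℝ) : Gmat x (c • p) = c • Gmat x p := by
  simp only [Gmat, Pi.smul_apply, smul_sum, smul_smul, smul_eq_mul]

lemma Hmat_convexComb_sub (t : ℝ) (p p' : Fin n → ℝ) {a b : ℝ} (hab : a + b = 1) :
    Hmat t x (a • p + b • p') - (a • Hmat t x p + b • Hmat t x p') =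
      (t * a * b) • vecMulVec (gvec x p - gvec x p') (gvec x p - gvec x p') := by
  obtain rfl : b = 1 - a := by linarith
  simp only [Hmat, Gmat_add, Gmat_smul, gvec_add, gvec_smul]
  ext i j
  simp only [Matrix.sub_apply, Matrix.add_apply, Matrix.smul_apply, vecMulVec_apply,
    Pi.add_apply, Pi.sub_apply, Pi.smul_apply, smul_eq_mul]
  ring

end Design

theorem statement_2_general {q n : ℕ}
    (x : Fin n → Fin q → ℝ) (t : ℝ) (ht0 : 0 ≤ t)
    (p ptilde : Fin n → ℝ)
    (hHp : (Hmat t x p).PosDef) (hHpt : (Hmat t x ptilde).PosDef)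
    (ε : ℝ) (hε0 : 0 < ε) (hε1 : ε < 1) :
    -Matrix.trace ((Hmat t x ((1 - ε) • p + ε • ptilde))⁻¹)
      ≥ (1 - ε) * (-Matrix.trace ((Hmat t x p)⁻¹))
        + ε * (-Matrix.trace ((Hmat t x ptilde)⁻¹)) := by
  have hε : 0 ≤ 1 - ε := by linarith
  have hweights : 1 - ε + ε = 1 := sub_add_cancel 1 ε
  have hmix : (1 - ε) • Hmat t x p + ε • Hmat t x ptilde ≤
      Hmat t x ((1 - ε) • p + ε • ptilde) := by
    rw [le_iff, Hmat_convexComb_sub x t p ptilde hweights]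
    simpa using (posSemidef_vecMulVec_self_star (gvec x p - gvec x ptilde)).smul
      (by positivity : 0 ≤ t * (1 - ε) * ε)
  have hinv : (Hmat t x ((1 - ε) • p + ε • ptilde))⁻¹ ≤
      (1 - ε) • (Hmat t x p)⁻¹ + ε • (Hmat t x ptilde)⁻¹ :=
    ((hHp.convexComb hHpt hε hε0.le hweights).inv_le_inv_of_le hmix).trans
      (hHp.inv_convexComb_le hHpt hε hε0.le hweights)
  have htrace := OrderHomClass.mono (tracePositiveLinearMap (Fin q) ℝ ℝ) hinv
  simp only [tracePositiveLinearMap_apply, trace_add, trace_smul, smul_eq_mul] at htrace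
  linarith

theorem statement_2 {q n : ℕ} (hq : 1 ≤ q) (hn : 1 ≤ n)
    (x : Fin n → Fin q → ℝ) (t : ℝ) (ht0 : 0 ≤ t) (ht1 : t < 1)
    (p ptilde : Fin n → ℝ) (hp : designMeasure p) (hpt : designMeasure ptilde)
    (hHp : (Hmat t x p).PosDef) (hHpt : (Hmat t x ptilde).PosDef)
    (ε : ℝ) (hε0 : 0 < ε) (hε1 : ε < 1) :
    -Matrix.trace ((Hmat t x ((1 - ε) • p + ε • ptilde))⁻¹)
      ≥ (1 - ε) * (-Matrix.trace ((Hmat t x p)⁻¹))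
        + ε * (-Matrix.trace ((Hmat t x ptilde)⁻¹)) :=
  statement_2_general x t ht0 p ptilde hHp hHpt ε hε0 hε1
end

section
/- Let t ∈ [0,1) and suppose there exists a design measure on the design points x_1, …, x_n ∈ ℝ^q whose matrix H is invertible. A design measure p is D-optimal (i.e., det H(p) ≥ det H(p') for every design measure p' with H(p') invertible) if and only if H(p) is invertible and ψ_{Di}(p) ≤ q for every i with 1 ≤ i ≤ n. -/
open Matrix BigOperators Finset

/-!
With `Kᵢ(p) = (1 - t) xᵢxᵢᵀ + t (xᵢ - g(p))(xᵢ - g(p))ᵀ` one has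
`H(p') = ∑ⱼ p'ⱼ Kⱼ(p) - t (g(p') - g(p))(g(p') - g(p))ᵀ` and `ψ_{Di}(p) = tr (H(p)⁻¹ Kᵢ(p))`.
Hence `H` is positive semidefinite and `tr (H(p)⁻¹ H(p')) ≤ ∑ⱼ p'ⱼ ψ_{Dj}(p)`.

If every `ψ_{Di}(p) ≤ q`, the eigenvalues of `H(p)^{-1/2} H(p') H(p)^{-1/2}` have sum at most `q`,
so by AM–GM their product `det H(p') / det H(p)` is at most `1`.

Conversely, moving mass `ε` from `p` to the point `xᵢ` gives, by
`det (A + C) ≥ det A · (1 + tr (A⁻¹ C))`, a lower bound `det H(p) · f(ε)` for the new determinant,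
where `f(0) = 1` and `f'(0) = ψ_{Di}(p) - q`. So `ψ_{Di}(p) > q` contradicts D-optimality.
-/

theorem Finset.one_add_sum_le_prod_one_add {ι : Type*} (s : Finset ι) {f : ι → ℝ}
    (hf : ∀ i ∈ s, 0 ≤ f i) : 1 + ∑ i ∈ s, f i ≤ ∏ i ∈ s, (1 + f i) := by
  classical
  induction s using Finset.induction_on with
  | empty => simp
  | insert a s ha ih =>
    rw [Finset.sum_insert ha, Finset.prod_insert ha]
    have hfa := hf a (Finset.mem_insert_self a s)
    have ih := ih fun i hi => hf i (Finset.mem_insert_of_mem hi)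
    have hs : 0 ≤ ∑ i ∈ s, f i := Finset.sum_nonneg fun i hi => hf i (Finset.mem_insert_of_mem hi)
    nlinarith

theorem Finset.prod_le_one_of_sum_le_card {ι : Type*} (s : Finset ι) {f : ι → ℝ}
    (hf : ∀ i ∈ s, 0 ≤ f i) (hsum : ∑ i ∈ s, f i ≤ s.card) : ∏ i ∈ s, f i ≤ 1 :=
  calc ∏ i ∈ s, f i
      ≤ ∏ i ∈ s, Real.exp (f i - 1) :=
        Finset.prod_le_prod hf fun i _ => by linarith [Real.add_one_le_exp (f i - 1)]
    _ = Real.exp (∑ i ∈ s, f i - s.card) := by simp [← Real.exp_sum, Finset.sum_sub_distrib]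
    _ ≤ 1 := Real.exp_le_one_iff.mpr (by linarith)

theorem exists_lt_of_hasDerivAt_pos {f : ℝ → ℝ} {d : ℝ} (hf : HasDerivAt f d 0) (hd : 0 < d) :
    ∃ ε ∈ Set.Ioo (0 : ℝ) 1, f 0 < f ε := by
  have hslope := hf.tendsto_slope_zero_right.eventually (lt_mem_nhds hd)
  obtain ⟨ε, hslope, hε⟩ := (hslope.and (Ioo_mem_nhdsGT one_pos)).exists
  refine ⟨ε, hε, ?_⟩
  rw [zero_add, smul_eq_mul] at hslope
  exact sub_pos.mp ((mul_pos_iff_of_pos_left (inv_pos.mpr hε.1)).mp hslope)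

namespace Matrix

variable {ι : Type*} [Fintype ι]

theorem trace_mul_vecMulVec_self (A : Matrix ι ι ℝ) (v : ι → ℝ) :
    (A * vecMulVec v v).trace = v ⬝ᵥ A *ᵥ v := by
  rw [mul_vecMulVec, trace_vecMulVec, dotProduct_comm]

theorem posSemidef_vecMulVec_self (v : ι → ℝ) : (vecMulVec v v).PosSemidef := by
  simpa using posSemidef_vecMulVec_self_star v

variable [DecidableEq ι] {A C M : Matrix ι ι ℝ}

theorem IsHermitian.det_one_add (hM : M.IsHermitian) :
    (1 + M).det = ∏ i, (1 + hM.eigenvalues i) := by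
  conv_lhs => rw [hM.spectral_theorem,
    ← map_one (Unitary.conjStarAlgAut ℝ (Matrix ι ι ℝ) hM.eigenvectorUnitary), ← map_add]
  simp [-Unitary.conjStarAlgAut_apply, ← diagonal_one, diagonal_add]

theorem PosSemidef.one_add_trace_le_det_one_add (hM : M.PosSemidef) :
    1 + M.trace ≤ (1 + M).det := by
  rw [hM.1.det_one_add, hM.1.trace_eq_sum_eigenvalues]
  exact Finset.univ.one_add_sum_le_prod_one_add fun i _ => hM.eigenvalues_nonneg i

theorem PosSemidef.det_le_one_of_trace_le_card (hM : M.PosSemidef)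
    (htr : M.trace ≤ Fintype.card ι) : M.det ≤ 1 := by
  rw [hM.1.det_eq_prod_eigenvalues]
  rw [hM.1.trace_eq_sum_eigenvalues] at htr
  exact Finset.univ.prod_le_one_of_sum_le_card (fun i _ => hM.eigenvalues_nonneg i) htr

open scoped MatrixOrder in
/-- The witness is `M = S⁻¹ C S⁻¹` with `S = √A`. -/
theorem PosDef.exists_congr_posSemidef (hA : A.PosDef) (hC : C.PosSemidef) :
    ∃ M : Matrix ι ι ℝ, M.PosSemidef ∧ M.trace = (A⁻¹ * C).trace ∧
      C.det = A.det * M.det ∧ (A + C).det = A.det * (1 + M).det := by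
  set S := CFC.sqrt A
  have hS : S.PosDef := hA.isStrictlyPositive.sqrt.posDef
  have hSS : S * S = A := CFC.sqrt_mul_sqrt_self A hA.posSemidef.nonneg
  have hSu : IsUnit S.det := hS.det_pos.ne'.isUnit
  have hdetA : A.det = S.det * S.det := by rw [← hSS, det_mul]
  have hconj : S * (S⁻¹ * C * S⁻¹) * S = C := by
    simp only [← Matrix.mul_assoc, mul_nonsing_inv _ hSu, Matrix.one_mul,
      Matrix.mul_assoc _ S⁻¹ S, nonsing_inv_mul _ hSu, Matrix.mul_one]
  refine ⟨S⁻¹ * C * S⁻¹, ?_, ?_, ?_, ?_⟩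
  · simpa only [hS.isHermitian.inv.eq] using hC.mul_mul_conjTranspose_same S⁻¹
  · rw [trace_mul_comm, ← Matrix.mul_assoc, ← mul_inv_rev, hSS]
  · conv_lhs => rw [← hconj]
    rw [det_mul, det_mul, hdetA]
    ring
  · have hsum : A + C = S * (1 + S⁻¹ * C * S⁻¹) * S := by
      rw [Matrix.mul_add, Matrix.add_mul, Matrix.mul_one, hSS, hconj]
    rw [hsum, det_mul, det_mul, hdetA]
    ring

theorem PosDef.det_mul_one_add_trace_le_det_add (hA : A.PosDef) (hC : C.PosSemidef) :
    A.det * (1 + (A⁻¹ * C).trace) ≤ (A + C).det := by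
  obtain ⟨M, hM, htr, -, hdet⟩ := hA.exists_congr_posSemidef hC
  rw [hdet, ← htr]
  exact mul_le_mul_of_nonneg_left hM.one_add_trace_le_det_one_add hA.det_pos.le

theorem PosDef.det_le_det_of_trace_inv_mul_le_card (hA : A.PosDef) (hC : C.PosSemidef)
    (htr : (A⁻¹ * C).trace ≤ Fintype.card ι) : C.det ≤ A.det := by
  obtain ⟨M, hM, hMtr, hdet, -⟩ := hA.exists_congr_posSemidef hC
  rw [hdet]
  exact mul_le_of_le_one_right hA.det_pos.le (hM.det_le_one_of_trace_le_card (hMtr ▸ htr))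

end Matrix

section Design

variable {q n : ℕ} {t : ℝ} {x : Fin n → Fin q → ℝ} {p p' : Fin n → ℝ}

theorem designMeasure.smul_add_smul_single (hp : designMeasure p) {ε : ℝ} (hε0 : 0 ≤ ε)
    (hε1 : ε ≤ 1) (i : Fin n) : designMeasure ((1 - ε) • p + ε • Pi.single i 1) :=
  convex_stdSimplex ℝ (Fin n) hp (single_mem_stdSimplex ℝ i) (sub_nonneg.mpr hε1) hε0 (by ring)

def Kmat (t : ℝ) (x : Fin n → Fin q → ℝ) (p : Fin n → ℝ) (i : Fin n) :
    Matrix (Fin q) (Fin q) ℝ :=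
  (1 - t) • vecMulVec (x i) (x i) + t • vecMulVec (x i - gvec x p) (x i - gvec x p)

theorem Kmat_posSemidef (ht0 : 0 ≤ t) (ht1 : t ≤ 1) (i : Fin n) : (Kmat t x p i).PosSemidef :=
  ((posSemidef_vecMulVec_self _).smul (sub_nonneg.mpr ht1)).add
    ((posSemidef_vecMulVec_self _).smul ht0)

theorem psiD_eq_trace (i : Fin n) : psiD t x p i = ((Hmat t x p)⁻¹ * Kmat t x p i).trace := by
  simp only [psiD, Kmat, Matrix.mul_add, Matrix.mul_smul, trace_add, trace_smul,
    trace_mul_vecMulVec_self, smul_eq_mul]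

theorem gvec_apply (a : Fin q) : gvec x p a = ∑ j, p j * x j a := by
  simp [gvec, Finset.sum_apply]

theorem Hmat_eq_sum_smul_Kmat_sub (h1 : ∑ j, p' j = 1) :
    Hmat t x p' = ∑ j, p' j • Kmat t x p j
      - t • vecMulVec (gvec x p' - gvec x p) (gvec x p' - gvec x p) := by
  ext a b
  simp only [Hmat, Gmat, Kmat, Matrix.sub_apply, Matrix.add_apply, Matrix.smul_apply,
    Matrix.sum_apply, vecMulVec_apply, smul_eq_mul, Pi.sub_apply]
  have expand : ∀ j, p' j * ((1 - t) * (x j a * x j b)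
      + t * ((x j a - gvec x p a) * (x j b - gvec x p b)))
      = p' j * (x j a * x j b) - (t * gvec x p b) * (p' j * x j a)
        - (t * gvec x p a) * (p' j * x j b) + (t * (gvec x p a * gvec x p b)) * p' j := by
    intro j; ring
  rw [Finset.sum_congr rfl fun j _ => expand j]
  simp only [Finset.sum_add_distrib, Finset.sum_sub_distrib, ← Finset.mul_sum, ← gvec_apply, h1]
  ring

theorem Hmat_eq_sum_smul_Kmat (h1 : ∑ j, p j = 1) : Hmat t x p = ∑ j, p j • Kmat t x p j := by
  simpa using Hmat_eq_sum_smul_Kmat_sub (t := t) (x := x) (p := p) h1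

theorem Hmat_posSemidef (hp : designMeasure p) (ht0 : 0 ≤ t) (ht1 : t ≤ 1) :
    (Hmat t x p).PosSemidef := by
  rw [Hmat_eq_sum_smul_Kmat hp.2]
  exact posSemidef_sum _ fun j _ => (Kmat_posSemidef ht0 ht1 j).smul (hp.1 j)

theorem Hmat_posDef (hp : designMeasure p) (ht0 : 0 ≤ t) (ht1 : t ≤ 1)
    (hdet : IsUnit (Hmat t x p).det) : (Hmat t x p).PosDef :=
  (Hmat_posSemidef hp ht0 ht1).posDef_iff_det_ne_zero.mpr hdet.ne_zero

theorem trace_inv_Hmat_mul_Hmat (h1 : ∑ j, p' j = 1) :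
    ((Hmat t x p)⁻¹ * Hmat t x p').trace = ∑ j, p' j * psiD t x p j
      - t * ((gvec x p' - gvec x p) ⬝ᵥ (Hmat t x p)⁻¹ *ᵥ (gvec x p' - gvec x p)) := by
  simp only [Hmat_eq_sum_smul_Kmat_sub (p := p) h1, Matrix.mul_sub, Matrix.mul_sum,
    Matrix.mul_smul, trace_sub, trace_sum, trace_smul, trace_mul_vecMulVec_self, psiD_eq_trace,
    smul_eq_mul]

theorem Hmat_smul_add_smul_single (h1 : ∑ j, p j = 1) (i : Fin n) (ε : ℝ) :
    Hmat t x ((1 - ε) • p + ε • Pi.single i 1) = (1 - ε) • Hmat t x p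
      + ((ε * (1 - t)) • vecMulVec (x i) (x i)
        + (t * ε * (1 - ε)) • vecMulVec (x i - gvec x p) (x i - gvec x p)) := by
  set pε : Fin n → ℝ := (1 - ε) • p + ε • Pi.single i 1
  have hsum : ∑ j, pε j = 1 := by
    simp [pε, Finset.sum_add_distrib, ← Finset.mul_sum, h1]
  have hg : gvec x pε - gvec x p = ε • (x i - gvec x p) := by
    simp only [pε, gvec, Pi.add_apply, Pi.smul_apply, smul_eq_mul, add_smul,
      Finset.sum_add_distrib, mul_smul, ← Finset.smul_sum, Pi.single_apply, ite_smul, one_smul,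
      zero_smul, Finset.sum_ite_eq', Finset.mem_univ, if_true]
    module
  have hK : ∑ j, pε j • Kmat t x p j = (1 - ε) • Hmat t x p + ε • Kmat t x p i := by
    simp only [pε, Hmat_eq_sum_smul_Kmat h1, Pi.add_apply, Pi.smul_apply, smul_eq_mul, add_smul,
      Finset.sum_add_distrib, mul_smul, ← Finset.smul_sum, Pi.single_apply, ite_smul, one_smul,
      zero_smul, Finset.sum_ite_eq', Finset.mem_univ, if_true]
  rw [Hmat_eq_sum_smul_Kmat_sub hsum, hK, hg, smul_vecMulVec, vecMulVec_smul, Kmat]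
  module

end Design

section Optimality

variable {q n : ℕ} {t : ℝ} {x : Fin n → Fin q → ℝ} {p : Fin n → ℝ}

theorem det_Hmat_le_of_psiD_le (ht0 : 0 ≤ t) (ht1 : t ≤ 1) (hH : (Hmat t x p).PosDef)
    (hψ : ∀ i, psiD t x p i ≤ q) {p' : Fin n → ℝ} (hp' : designMeasure p') :
    (Hmat t x p').det ≤ (Hmat t x p).det := by
  refine hH.det_le_det_of_trace_inv_mul_le_card (Hmat_posSemidef hp' ht0 ht1) ?_
  rw [trace_inv_Hmat_mul_Hmat hp'.2, Fintype.card_fin]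
  have hmean : ∑ j, p' j * psiD t x p j ≤ q :=
    calc ∑ j, p' j * psiD t x p j ≤ ∑ j, p' j * q :=
          Finset.sum_le_sum fun j _ => mul_le_mul_of_nonneg_left (hψ j) (hp'.1 j)
      _ = q := by rw [← Finset.sum_mul, hp'.2, one_mul]
  have hquad := hH.inv.posSemidef.dotProduct_mulVec_nonneg (gvec x p' - gvec x p)
  rw [star_trivial] at hquad
  linarith [mul_nonneg ht0 hquad]

theorem det_mul_le_det_Hmat_smul_add_smul_single (ht0 : 0 ≤ t) (ht1 : t ≤ 1) (h1 : ∑ j, p j = 1)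
    (hH : (Hmat t x p).PosDef) (i : Fin n) {ε : ℝ} (hε : ε ∈ Set.Ioo (0 : ℝ) 1) :
    let a := x i ⬝ᵥ (Hmat t x p)⁻¹ *ᵥ x i
    let b := (x i - gvec x p) ⬝ᵥ (Hmat t x p)⁻¹ *ᵥ (x i - gvec x p)
    (Hmat t x p).det * ((1 - ε) ^ q * (1 + (1 - ε)⁻¹ * (ε * (1 - t) * a + t * ε * (1 - ε) * b)))
      ≤ (Hmat t x ((1 - ε) • p + ε • Pi.single i 1)).det := by
  intro a b
  have hε1 : 0 < 1 - ε := sub_pos.mpr hε.2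
  have hB : ((1 - ε) • Hmat t x p).PosDef := hH.smul hε1
  have hC : ((ε * (1 - t)) • vecMulVec (x i) (x i)
      + (t * ε * (1 - ε)) • vecMulVec (x i - gvec x p) (x i - gvec x p)).PosSemidef :=
    ((posSemidef_vecMulVec_self _).smul (by nlinarith [hε.1])).add
      ((posSemidef_vecMulVec_self _).smul (mul_nonneg (mul_nonneg ht0 hε.1.le) hε1.le))
  rw [Hmat_smul_add_smul_single h1]
  refine le_of_eq_of_le ?_ (hB.det_mul_one_add_trace_le_det_add hC)
  have hBinv : ((1 - ε) • Hmat t x p)⁻¹ = (1 - ε)⁻¹ • (Hmat t x p)⁻¹ :=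
    inv_eq_left_inv (by simp [smul_smul, hε1.ne', nonsing_inv_mul _ hH.det_pos.ne'.isUnit])
  rw [det_smul, Fintype.card_fin, hBinv]
  simp only [Matrix.smul_mul, Matrix.mul_add, Matrix.mul_smul, trace_smul, trace_add,
    trace_mul_vecMulVec_self, smul_eq_mul, a, b]
  ring

theorem exists_det_Hmat_gt_of_psiD_gt (ht0 : 0 ≤ t) (ht1 : t ≤ 1) (hp : designMeasure p)
    (hH : (Hmat t x p).PosDef) (i : Fin n) (hi : q < psiD t x p i) :
    ∃ p' : Fin n → ℝ, designMeasure p' ∧ (Hmat t x p).det < (Hmat t x p').det := by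
  set a := x i ⬝ᵥ (Hmat t x p)⁻¹ *ᵥ x i
  set b := (x i - gvec x p) ⬝ᵥ (Hmat t x p)⁻¹ *ᵥ (x i - gvec x p)
  set f : ℝ → ℝ := fun ε => (1 - ε) ^ q * (1 + (1 - ε)⁻¹ * (ε * (1 - t) * a + t * ε * (1 - ε) * b))
  have hf : HasDerivAt f (psiD t x p i - q) 0 := by
    have h1 : HasDerivAt (fun ε : ℝ => 1 - ε) (-1) 0 := (hasDerivAt_id 0).const_sub 1
    have := (h1.fun_pow q).fun_mul (((h1.fun_inv (by norm_num)).fun_mul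
      ((((hasDerivAt_id' 0).mul_const (1 - t)).mul_const a).fun_add
        ((((hasDerivAt_id' 0).const_mul t).fun_mul h1).mul_const b))).const_add 1)
    refine this.congr_deriv ?_
    norm_num [psiD, a, b]
    ring
  obtain ⟨ε, hε, hfε⟩ := exists_lt_of_hasDerivAt_pos hf (sub_pos.mpr hi)
  refine ⟨_, hp.smul_add_smul_single hε.1.le hε.2.le i, ?_⟩
  calc (Hmat t x p).det = (Hmat t x p).det * f 0 := by simp [f]
    _ < (Hmat t x p).det * f ε := mul_lt_mul_of_pos_left hfε hH.det_pos
    _ ≤ _ := det_mul_le_det_Hmat_smul_add_smul_single ht0 ht1 hp.2 hH i hε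

end Optimality

theorem statement_5_general {q n : ℕ}
    (x : Fin n → Fin q → ℝ) (t : ℝ) (ht0 : 0 ≤ t) (ht1 : t < 1)
    (hex : ∃ p0 : Fin n → ℝ, designMeasure p0 ∧ IsUnit (Hmat t x p0).det)
    (p : Fin n → ℝ) (hp : designMeasure p) :
    (∀ p' : Fin n → ℝ, designMeasure p' → IsUnit (Hmat t x p').det →
        (Hmat t x p').det ≤ (Hmat t x p).det)
      ↔ (IsUnit (Hmat t x p).det ∧ ∀ i, psiD t x p i ≤ q) := by
  constructor
  · intro hopt
    obtain ⟨p0, hp0, hdet0⟩ := hex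
    have hdet : 0 < (Hmat t x p).det :=
      (Hmat_posDef hp0 ht0 ht1.le hdet0).det_pos.trans_le (hopt p0 hp0 hdet0)
    have hH := Hmat_posDef hp ht0 ht1.le hdet.ne'.isUnit
    refine ⟨hdet.ne'.isUnit, fun i => not_lt.mp fun hi => ?_⟩
    obtain ⟨p', hp', hlt⟩ := exists_det_Hmat_gt_of_psiD_gt ht0 ht1.le hp hH i hi
    exact (hopt p' hp' (hdet.trans hlt).ne'.isUnit).not_gt hlt
  · rintro ⟨hdet, hψ⟩ p' hp' -
    exact det_Hmat_le_of_psiD_le ht0 ht1.le (Hmat_posDef hp ht0 ht1.le hdet) hψ hp'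

theorem statement_5 {q n : ℕ} (hq : 1 ≤ q) (hn : 1 ≤ n)
    (x : Fin n → Fin q → ℝ) (t : ℝ) (ht0 : 0 ≤ t) (ht1 : t < 1)
    (hex : ∃ p0 : Fin n → ℝ, designMeasure p0 ∧ IsUnit (Hmat t x p0).det)
    (p : Fin n → ℝ) (hp : designMeasure p) :
    (∀ p' : Fin n → ℝ, designMeasure p' → IsUnit (Hmat t x p').det →
        (Hmat t x p').det ≤ (Hmat t x p).det)
      ↔ (IsUnit (Hmat t x p).det ∧ ∀ i, psiD t x p i ≤ q) :=
  statement_5_general x t ht0 ht1 hex p hp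
end

section
/- Let q = 2m with m ≥ 2 an integer, let Ω be the set of all nonzero vectors in {0,1}^q, and fix t ∈ [0,1). Let p_ev1 assign mass (n_m + n_{m+1})⁻¹ to each point of Ω_m ∪ Ω_{m+1} and mass 0 elsewhere, and let p_ev2 assign mass n_m⁻¹ to each point of Ω_m and mass 0 elsewhere. Then: g(p_ev1) = {(m+1)/(2m+1)}·1_q and g(p_ev2) = (1/2)·1_q; both H(p_ev1) and H(p_ev2) are invertible; {H(p_ev1)}⁻¹ = [2(2m+1)/(m+1)]·{I_q − q⁻¹J_q + [(2m+1)/(1 + 4m(m+1)(1−t))]·q⁻¹J_q}; and {H(p_ev2)}⁻¹ = [2(2m−1)/m]·(I_q − q⁻¹J_q) + [2/(m(1−t))]·q⁻¹J_q, where 1_q is the q×1 vector of ones, I_q the identity matrix of order q, and J_q = 1_q1_qᵀ. -/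
open Matrix BigOperators Finset

noncomputable section

/-- The binary design point (0/1 vector) with support `S`. -/
def ind {q : ℕ} (S : Finset (Fin q)) : Fin q → ℝ := fun i => if i ∈ S then 1 else 0

/-- A design measure on the nonzero binary vectors of length `q`, indexed by
their supports: nonnegative masses summing to 1, with zero mass on the zero vector. -/
def designMeasureB {q : ℕ} (p : Finset (Fin q) → ℝ) : Prop :=
  p ∅ = 0 ∧ (∀ S, 0 ≤ p S) ∧ ∑ S : Finset (Fin q), p S = 1

/-- G(p) = Σ p_x x xᵀ. -/
def GmatB {q : ℕ} (p : Finset (Fin q) → ℝ) : Matrix (Fin q) (Fin q) ℝ :=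
  ∑ S : Finset (Fin q), p S • Matrix.vecMulVec (ind S) (ind S)

/-- g(p) = Σ p_x x. -/
def gvecB {q : ℕ} (p : Finset (Fin q) → ℝ) : Fin q → ℝ :=
  ∑ S : Finset (Fin q), p S • ind S

/-- H(p) = G(p) − t g(p) g(p)ᵀ. -/
def HmatB {q : ℕ} (t : ℝ) (p : Finset (Fin q) → ℝ) : Matrix (Fin q) (Fin q) ℝ :=
  GmatB p - t • Matrix.vecMulVec (gvecB p) (gvecB p)

/-- The all-ones q×q matrix J_q. -/
def Jmat (q : ℕ) : Matrix (Fin q) (Fin q) ℝ := Matrix.of fun _ _ => 1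

end

/-!
Both designs are exchangeable: the mass of a support depends only on its size. Since there are
`C(q - #s, n - #s)` supports of size `n` containing a given set `s`, every coordinate of `g(p)`
equals one number `g` and every off-diagonal entry of `G(p)` equals one number `r`, so
`H(p) = (g - r) I + (r - t g²) J`. With the idempotent `P = J / q` this is
`(g - r) (I - P) + (g - r + q (r - t g²)) P`, which is inverted by inverting the two eigenvalues.
For `q = 2m` the values of `g` and `r` come from Pascal's rule and `C(2m, m) = 2 C(2m - 1, m - 1)`.
-/

section Counting
variable {α : Type*} [Fintype α] [DecidableEq α]

theorem card_filter_card_eq_and_subset (s : Finset α) {n : ℕ} (hsn : #s ≤ n) :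
    #{S : Finset α | #S = n ∧ s ⊆ S} = (Fintype.card α - #s).choose (n - #s) := by
  rw [← card_univ, ← card_filter_powersetCard_subset s univ n (subset_univ s) hsn,
    ← univ_filter_card_eq, filter_filter]

theorem sum_filter_subset_comp_card {R : Type*} [Semiring R] (s : Finset α) (w : ℕ → R)
    (K : Finset ℕ) (hw : ∀ n ∉ K, w n = 0) (hK : ∀ n ∈ K, #s ≤ n) :
    ∑ S : Finset α with s ⊆ S, w #S
      = ∑ n ∈ K, ((Fintype.card α - #s).choose (n - #s) : R) * w n := by
  rw [← sum_filter_of_ne (p := fun S => #S ∈ K) fun S _ hS => by_contra fun h => hS (hw _ h),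
    ← sum_fiberwise_eq_sum_filter']
  refine sum_congr rfl fun n hn => ?_
  rw [sum_const, nsmul_eq_mul, filter_filter, ← card_filter_card_eq_and_subset s (hK n hn)]
  congr 3
  ext S; simp [and_comm]
end Counting

section Moments
variable {q : ℕ}

theorem gvecB_apply (p : Finset (Fin q) → ℝ) (i : Fin q) :
    gvecB p i = ∑ S with i ∈ S, p S := by
  simp [gvecB, ind, sum_filter]

theorem GmatB_apply (p : Finset (Fin q) → ℝ) (i k : Fin q) :
    GmatB p i k = ∑ S with i ∈ S ∧ k ∈ S, p S := by
  rw [sum_filter]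
  simp only [GmatB, Matrix.sum_apply, Matrix.smul_apply, vecMulVec_apply, ind]
  refine sum_congr rfl fun S _ => ?_
  split_ifs <;> simp_all

theorem GmatB_apply_self (p : Finset (Fin q) → ℝ) (i : Fin q) : GmatB p i i = gvecB p i := by
  simp_rw [GmatB_apply, gvecB_apply, and_self]

theorem gvecB_comp_card (w : ℕ → ℝ) (K : Finset ℕ) (hw : ∀ n ∉ K, w n = 0) (hK : 0 ∉ K)
    (i : Fin q) :
    gvecB (fun S => w #S) i = ∑ n ∈ K, ((q - 1).choose (n - 1) : ℝ) * w n := by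
  rw [gvecB_apply]
  simp_rw [← singleton_subset_iff]
  rw [sum_filter_subset_comp_card _ w K hw fun n hn => ?_]
  · simp
  · simpa [Nat.one_le_iff_ne_zero] using ne_of_mem_of_not_mem hn hK

theorem GmatB_comp_card_of_ne (w : ℕ → ℝ) (K : Finset ℕ) (hw : ∀ n ∉ K, w n = 0)
    (hK : ∀ n ∈ K, 2 ≤ n) {i k : Fin q} (hik : i ≠ k) :
    GmatB (fun S => w #S) i k = ∑ n ∈ K, ((q - 2).choose (n - 2) : ℝ) * w n := by
  have hpair : ∀ S : Finset (Fin q), i ∈ S ∧ k ∈ S ↔ {i, k} ⊆ S := by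
    simp [insert_subset_iff]
  simp_rw [GmatB_apply, hpair]
  rw [sum_filter_subset_comp_card _ w K hw fun n hn => by simpa [card_pair hik] using hK n hn]
  simp [card_pair hik]

theorem HmatB_eq_smul_one_add_smul_Jmat (t : ℝ) (p : Finset (Fin q) → ℝ) {g r : ℝ}
    (hg : ∀ i, gvecB p i = g) (hG : ∀ i k, i ≠ k → GmatB p i k = r) :
    HmatB t p = (g - r) • (1 : Matrix (Fin q) (Fin q) ℝ) + (r - t * g ^ 2) • Jmat q := by
  ext i k
  rcases eq_or_ne i k with rfl | hik
  · simp only [HmatB, Matrix.sub_apply, Matrix.smul_apply, vecMulVec_apply, Matrix.add_apply,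
      one_apply_eq, Jmat, of_apply, GmatB_apply_self, hg, smul_eq_mul]
    ring
  · simp only [HmatB, Matrix.sub_apply, Matrix.smul_apply, vecMulVec_apply, Matrix.add_apply,
      one_apply_ne hik, Jmat, of_apply, hG i k hik, hg, smul_eq_mul]
    ring

end Moments

namespace IsIdempotentElem
variable {K A : Type*} [Field K] [Ring A] [Algebra K A] {P : A}

theorem smul_one_sub_add_smul_mul (hP : IsIdempotentElem P) (x y x' y' : K) :
    (x • (1 - P) + y • P) * (x' • (1 - P) + y' • P) = (x * x') • (1 - P) + (y * y') • P := by
  simp only [add_mul, mul_add, smul_mul_smul, hP.one_sub.eq, hP.eq, hP.one_sub_mul_self,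
    hP.mul_one_sub_self, smul_zero, add_zero, zero_add]

theorem smul_one_sub_add_smul_mul_inv (hP : IsIdempotentElem P) {x y : K} (hx : x ≠ 0)
    (hy : y ≠ 0) : (x • (1 - P) + y • P) * (x⁻¹ • (1 - P) + y⁻¹ • P) = 1 := by
  rw [hP.smul_one_sub_add_smul_mul, mul_inv_cancel₀ hx, mul_inv_cancel₀ hy, one_smul, one_smul,
    sub_add_cancel]

end IsIdempotentElem

section AllOnes
variable {q : ℕ}

theorem Jmat_mul_Jmat : Jmat q * Jmat q = (q : ℝ) • Jmat q := by
  ext i k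
  simp [Jmat, mul_apply]

theorem isIdempotentElem_inv_smul_Jmat (hq : q ≠ 0) : IsIdempotentElem ((q : ℝ)⁻¹ • Jmat q) := by
  rw [IsIdempotentElem, smul_mul_smul, Jmat_mul_Jmat, smul_smul, inv_mul_cancel_right₀
    (Nat.cast_ne_zero.mpr hq)]

theorem smul_one_add_smul_Jmat_eq (hq : q ≠ 0) (a b : ℝ) :
    a • (1 : Matrix (Fin q) (Fin q) ℝ) + b • Jmat q
      = a • (1 - (q : ℝ)⁻¹ • Jmat q) + (a + q * b) • ((q : ℝ)⁻¹ • Jmat q) := by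
  have hq' : (q : ℝ) ≠ 0 := Nat.cast_ne_zero.mpr hq
  rw [smul_sub, smul_smul, smul_smul, add_mul, mul_comm (q : ℝ) b, mul_assoc,
    mul_inv_cancel₀ hq', mul_one]
  module

end AllOnes

namespace Matrix
variable {n K : Type*} [Fintype n] [DecidableEq n] [Field K] {P : Matrix n n K}

theorem inv_smul_one_sub_add_smul_of_isIdempotentElem (hP : IsIdempotentElem P) {x y : K}
    (hx : x ≠ 0) (hy : y ≠ 0) :
    (x • (1 - P) + y • P)⁻¹ = x⁻¹ • (1 - P) + y⁻¹ • P :=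
  inv_eq_right_inv (hP.smul_one_sub_add_smul_mul_inv hx hy)

theorem isUnit_det_smul_one_sub_add_smul_of_isIdempotentElem (hP : IsIdempotentElem P) {x y : K}
    (hx : x ≠ 0) (hy : y ≠ 0) : IsUnit (x • (1 - P) + y • P).det :=
  isUnit_det_of_right_inverse (hP.smul_one_sub_add_smul_mul_inv hx hy)

end Matrix

section CentralBinomial
variable {m : ℕ}

theorem two_mul_choose_two_mul_sub_one (hm : m ≠ 0) :
    2 * (2 * m - 1).choose (m - 1) = (2 * m).choose m := by
  have h := Nat.choose_mul (n := 2 * m) (k := m) (s := 1) (by omega)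
  rw [Nat.choose_one_right, Nat.choose_one_right] at h
  exact Nat.eq_of_mul_eq_mul_right (Nat.pos_of_ne_zero hm) (by rw [h]; ring)

theorem choose_two_mul_sub_one_add_choose (hm : m ≠ 0) :
    (2 * m - 1).choose (m - 1) + (2 * m - 1).choose m = (2 * m).choose m := by
  obtain ⟨k, rfl⟩ : ∃ k, m = k + 1 := ⟨m - 1, by omega⟩
  rw [show 2 * (k + 1) - 1 = 2 * k + 1 by omega, show 2 * (k + 1) = 2 * k + 1 + 1 by ring,
    Nat.add_sub_cancel]
  exact (Nat.choose_succ_succ' _ _).symm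

theorem choose_two_mul_sub_two_add_choose (hm : 2 ≤ m) :
    (2 * m - 2).choose (m - 2) + (2 * m - 2).choose (m - 1) = (2 * m - 1).choose (m - 1) := by
  obtain ⟨k, rfl⟩ := Nat.exists_eq_add_of_le' hm
  rw [show 2 * (k + 2) - 2 = 2 * k + 2 by omega, show 2 * (k + 2) - 1 = 2 * k + 2 + 1 by omega,
    show k + 2 - 1 = k + 1 by omega, Nat.add_sub_cancel]
  exact (Nat.choose_succ_succ' _ _).symm

theorem choose_two_mul_succ_mul (m : ℕ) :
    (2 * m).choose (m + 1) * (m + 1) = (2 * m).choose m * m := by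
  rw [Nat.choose_succ_right_eq, show 2 * m - m = m by omega]

theorem two_mul_two_mul_sub_one_mul_choose (hm : 2 ≤ m) :
    2 * (2 * m - 1) * (2 * m - 2).choose (m - 2) = (m - 1) * (2 * m).choose m := by
  have h := Nat.choose_mul (n := 2 * m - 1) (k := m - 1) (s := 1) (by omega)
  rw [Nat.choose_one_right, Nat.choose_one_right, show 2 * m - 1 - 1 = 2 * m - 2 by omega,
    show m - 1 - 1 = m - 2 by omega] at h
  rw [← two_mul_choose_two_mul_sub_one (by omega : m ≠ 0), mul_assoc, ← h]
  ring

theorem choose_div_choose_add_choose_succ (m : ℕ) :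
    ((2 * m).choose m : ℝ) / ((2 * m).choose m + (2 * m).choose (m + 1))
      = ((m : ℝ) + 1) / (2 * m + 1) := by
  have hB : ((2 * m).choose (m + 1) : ℝ) * (m + 1) = (2 * m).choose m * m := by
    exact_mod_cast choose_two_mul_succ_mul m
  have hN : (0 : ℝ) < (2 * m).choose m := by exact_mod_cast Nat.choose_pos (by omega)
  have hB0 : (0 : ℝ) ≤ (2 * m).choose (m + 1) := Nat.cast_nonneg _
  rw [div_eq_div_iff (by positivity) (by positivity)]
  linear_combination -hB

end CentralBinomial

noncomputable def designEv1 (m : ℕ) : Finset (Fin (2*m)) → ℝ := fun S =>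
  if S.card = m ∨ S.card = m + 1 then
    ((Nat.choose (2*m) m : ℝ) + (Nat.choose (2*m) (m+1) : ℝ))⁻¹ else 0

noncomputable def designEv2 (m : ℕ) : Finset (Fin (2*m)) → ℝ := fun S =>
  if S.card = m then ((Nat.choose (2*m) m : ℝ))⁻¹ else 0

section EvenDesigns
variable {m : ℕ}

theorem gvecB_designEv1 (hm : m ≠ 0) :
    gvecB (designEv1 m) = fun _ => ((m : ℝ) + 1) / (2 * (m : ℝ) + 1) := by
  funext i
  refine (gvecB_comp_card (fun n => if n = m ∨ n = m + 1 then
    ((Nat.choose (2*m) m : ℝ) + (Nat.choose (2*m) (m+1) : ℝ))⁻¹ else 0) {m, m + 1}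
    (fun n hn => by simp_all) (by simp; omega) i).trans ?_
  rw [sum_pair (by omega), if_pos (Or.inl rfl), if_pos (Or.inr rfl), Nat.add_sub_cancel,
    ← add_mul, ← Nat.cast_add, choose_two_mul_sub_one_add_choose hm, ← div_eq_mul_inv,
    choose_div_choose_add_choose_succ]

theorem GmatB_designEv1_of_ne (hm : 2 ≤ m) {i k : Fin (2 * m)} (hik : i ≠ k) :
    GmatB (designEv1 m) i k = ((m : ℝ) + 1) / (2 * (2 * (m : ℝ) + 1)) := by
  refine (GmatB_comp_card_of_ne (fun n => if n = m ∨ n = m + 1 then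
    ((Nat.choose (2*m) m : ℝ) + (Nat.choose (2*m) (m+1) : ℝ))⁻¹ else 0) {m, m + 1}
    (fun n hn => by simp_all) (by simp; omega) hik).trans ?_
  have hX : ((2 * m - 1).choose (m - 1) : ℝ) = (2 * m).choose m / 2 := by
    rw [eq_div_iff two_ne_zero, mul_comm]
    exact_mod_cast two_mul_choose_two_mul_sub_one (by omega : m ≠ 0)
  rw [sum_pair (by omega), if_pos (Or.inl rfl), if_pos (Or.inr rfl),
    show m + 1 - 2 = m - 1 by omega, ← add_mul, ← Nat.cast_add,
    choose_two_mul_sub_two_add_choose hm, hX, div_mul_eq_mul_div, ← div_eq_mul_inv,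
    choose_div_choose_add_choose_succ, div_div, mul_comm]

theorem gvecB_designEv2 (hm : m ≠ 0) : gvecB (designEv2 m) = fun _ => (1 / 2 : ℝ) := by
  funext i
  refine (gvecB_comp_card (fun n => if n = m then ((Nat.choose (2*m) m : ℝ))⁻¹ else 0) {m}
    (fun n hn => by simp_all) (by simpa using hm.symm) i).trans ?_
  have hN : ((2 * m).choose m : ℝ) ≠ 0 := by exact_mod_cast (Nat.choose_pos (by omega)).ne'
  rw [sum_singleton, if_pos rfl, ← mul_inv_cancel₀ hN, ← two_mul_choose_two_mul_sub_one hm]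
  push_cast
  field_simp

theorem GmatB_designEv2_of_ne (hm : 2 ≤ m) {i k : Fin (2 * m)} (hik : i ≠ k) :
    GmatB (designEv2 m) i k = ((m : ℝ) - 1) / (2 * (2 * (m : ℝ) - 1)) := by
  refine (GmatB_comp_card_of_ne (fun n => if n = m then ((Nat.choose (2*m) m : ℝ))⁻¹ else 0) {m}
    (fun n hn => by simp_all) (by simpa using hm) hik).trans ?_
  have hN : ((2 * m).choose m : ℝ) ≠ 0 := by exact_mod_cast (Nat.choose_pos (by omega)).ne'
  have hq : 2 * (2 * (m : ℝ) - 1) ≠ 0 := by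
    have : (2 : ℝ) ≤ m := by exact_mod_cast hm
    linarith
  have h := congrArg (Nat.cast : ℕ → ℝ) (two_mul_two_mul_sub_one_mul_choose hm)
  push_cast [Nat.cast_sub (show 1 ≤ 2 * m by omega), Nat.cast_sub (show 1 ≤ m by omega)] at h
  rw [sum_singleton, if_pos rfl, eq_div_iff hq]
  field_simp
  linear_combination h

theorem HmatB_designEv1 (hm : 2 ≤ m) (t : ℝ) :
    HmatB t (designEv1 m)
      = ((m + 1) / (2 * (2 * m + 1)) : ℝ) • (1 - ((2 * m : ℝ))⁻¹ • Jmat (2 * m))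
        + ((m + 1) * (1 + 4 * m * (m + 1) * (1 - t)) / (2 * (2 * m + 1) ^ 2) : ℝ)
          • (((2 * m : ℝ))⁻¹ • Jmat (2 * m)) := by
  rw [HmatB_eq_smul_one_add_smul_Jmat t _ (congrFun (gvecB_designEv1 (by omega)))
    fun i k => GmatB_designEv1_of_ne hm, smul_one_add_smul_Jmat_eq (by omega)]
  have h : (2 * (m : ℝ) + 1) ≠ 0 := by positivity
  push_cast
  congr 2 <;> field_simp <;> ring

theorem HmatB_designEv2 (hm : 2 ≤ m) (t : ℝ) :
    HmatB t (designEv2 m)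
      = ((m : ℝ) / (2 * (2 * m - 1))) • (1 - ((2 * m : ℝ))⁻¹ • Jmat (2 * m))
        + ((m : ℝ) * (1 - t) / 2) • (((2 * m : ℝ))⁻¹ • Jmat (2 * m)) := by
  rw [HmatB_eq_smul_one_add_smul_Jmat t _ (congrFun (gvecB_designEv2 (by omega)))
    fun i k => GmatB_designEv2_of_ne hm, smul_one_add_smul_Jmat_eq (by omega)]
  have h : (2 * (m : ℝ) - 1) ≠ 0 := by
    have : (2 : ℝ) ≤ m := by exact_mod_cast hm
    linarith
  push_cast
  congr 2 <;> field_simp <;> ring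

end EvenDesigns

theorem statement_16_general (m : ℕ) (hm : 2 ≤ m) (t : ℝ) (ht1 : t < 1) :
    gvecB (fun S : Finset (Fin (2*m)) =>
        if S.card = m ∨ S.card = m + 1 then
          ((Nat.choose (2*m) m : ℝ) + (Nat.choose (2*m) (m+1) : ℝ))⁻¹ else 0)
      = (fun _ => ((m : ℝ) + 1) / (2*(m : ℝ) + 1))
    ∧ gvecB (fun S : Finset (Fin (2*m)) =>
          if S.card = m then ((Nat.choose (2*m) m : ℝ))⁻¹ else 0)
        = (fun _ => (1/2 : ℝ))
    ∧ IsUnit (HmatB t (fun S : Finset (Fin (2*m)) =>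
        if S.card = m ∨ S.card = m + 1 then
          ((Nat.choose (2*m) m : ℝ) + (Nat.choose (2*m) (m+1) : ℝ))⁻¹ else 0)).det
    ∧ IsUnit (HmatB t (fun S : Finset (Fin (2*m)) =>
        if S.card = m then ((Nat.choose (2*m) m : ℝ))⁻¹ else 0)).det
    ∧ (HmatB t (fun S : Finset (Fin (2*m)) =>
        if S.card = m ∨ S.card = m + 1 then
          ((Nat.choose (2*m) m : ℝ) + (Nat.choose (2*m) (m+1) : ℝ))⁻¹ else 0))⁻¹
      = (2*(2*(m : ℝ)+1)/((m : ℝ)+1)) •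
          ((1 : Matrix (Fin (2*m)) (Fin (2*m)) ℝ) - ((2*m : ℝ))⁻¹ • Jmat (2*m)
            + ((2*(m : ℝ)+1)/(1 + 4*(m : ℝ)*((m : ℝ)+1)*(1-t))) •
                (((2*m : ℝ))⁻¹ • Jmat (2*m)))
    ∧ (HmatB t (fun S : Finset (Fin (2*m)) =>
        if S.card = m then ((Nat.choose (2*m) m : ℝ))⁻¹ else 0))⁻¹
      = (2*(2*(m : ℝ)-1)/(m : ℝ)) •
          ((1 : Matrix (Fin (2*m)) (Fin (2*m)) ℝ) - ((2*m : ℝ))⁻¹ • Jmat (2*m))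
        + (2/((m : ℝ)*(1-t))) • (((2*m : ℝ))⁻¹ • Jmat (2*m)) := by
  show gvecB (designEv1 m) = _ ∧ gvecB (designEv2 m) = _ ∧ IsUnit (HmatB t (designEv1 m)).det
    ∧ IsUnit (HmatB t (designEv2 m)).det ∧ (HmatB t (designEv1 m))⁻¹ = _
    ∧ (HmatB t (designEv2 m))⁻¹ = _
  have hP : IsIdempotentElem ((2 * m : ℝ)⁻¹ • Jmat (2 * m)) := by
    simpa using isIdempotentElem_inv_smul_Jmat (q := 2 * m) (by omega)
  have hm' : (2 : ℝ) ≤ m := by exact_mod_cast hm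
  have ht : 0 < 1 - t := sub_pos.mpr ht1
  have hx₁ : ((m + 1) / (2 * (2 * m + 1)) : ℝ) ≠ 0 := by positivity
  have hy₁ : ((m + 1) * (1 + 4 * m * (m + 1) * (1 - t)) / (2 * (2 * m + 1) ^ 2) : ℝ) ≠ 0 := by
    positivity
  have hx₂ : ((m : ℝ) / (2 * (2 * m - 1))) ≠ 0 :=
    div_ne_zero (by positivity) (by linarith : (0 : ℝ) < 2 * (2 * m - 1)).ne'
  have hy₂ : ((m : ℝ) * (1 - t) / 2) ≠ 0 := by positivity
  rw [HmatB_designEv1 hm, HmatB_designEv2 hm,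
    inv_smul_one_sub_add_smul_of_isIdempotentElem hP hx₁ hy₁,
    inv_smul_one_sub_add_smul_of_isIdempotentElem hP hx₂ hy₂]
  refine ⟨gvecB_designEv1 (by omega), gvecB_designEv2 (by omega),
    isUnit_det_smul_one_sub_add_smul_of_isIdempotentElem hP hx₁ hy₁,
    isUnit_det_smul_one_sub_add_smul_of_isIdempotentElem hP hx₂ hy₂, ?_, ?_⟩
  · rw [smul_add, smul_smul (2 * (2 * (m : ℝ) + 1) / ((m : ℝ) + 1))]
    congr 1 <;> congr 1 <;> field_simp
  · congr 1 <;> congr 1 <;> field_simp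

theorem statement_16 (m : ℕ) (hm : 2 ≤ m) (t : ℝ) (ht0 : 0 ≤ t) (ht1 : t < 1) :
    gvecB (fun S : Finset (Fin (2*m)) =>
        if S.card = m ∨ S.card = m + 1 then
          ((Nat.choose (2*m) m : ℝ) + (Nat.choose (2*m) (m+1) : ℝ))⁻¹ else 0)
      = (fun _ => ((m : ℝ) + 1) / (2*(m : ℝ) + 1))
    ∧ gvecB (fun S : Finset (Fin (2*m)) =>
          if S.card = m then ((Nat.choose (2*m) m : ℝ))⁻¹ else 0)
        = (fun _ => (1/2 : ℝ))
    ∧ IsUnit (HmatB t (fun S : Finset (Fin (2*m)) =>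
        if S.card = m ∨ S.card = m + 1 then
          ((Nat.choose (2*m) m : ℝ) + (Nat.choose (2*m) (m+1) : ℝ))⁻¹ else 0)).det
    ∧ IsUnit (HmatB t (fun S : Finset (Fin (2*m)) =>
        if S.card = m then ((Nat.choose (2*m) m : ℝ))⁻¹ else 0)).det
    ∧ (HmatB t (fun S : Finset (Fin (2*m)) =>
        if S.card = m ∨ S.card = m + 1 then
          ((Nat.choose (2*m) m : ℝ) + (Nat.choose (2*m) (m+1) : ℝ))⁻¹ else 0))⁻¹
      = (2*(2*(m : ℝ)+1)/((m : ℝ)+1)) •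
          ((1 : Matrix (Fin (2*m)) (Fin (2*m)) ℝ) - ((2*m : ℝ))⁻¹ • Jmat (2*m)
            + ((2*(m : ℝ)+1)/(1 + 4*(m : ℝ)*((m : ℝ)+1)*(1-t))) •
                (((2*m : ℝ))⁻¹ • Jmat (2*m)))
    ∧ (HmatB t (fun S : Finset (Fin (2*m)) =>
        if S.card = m then ((Nat.choose (2*m) m : ℝ))⁻¹ else 0))⁻¹
      = (2*(2*(m : ℝ)-1)/(m : ℝ)) •
          ((1 : Matrix (Fin (2*m)) (Fin (2*m)) ℝ) - ((2*m : ℝ))⁻¹ • Jmat (2*m))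
        + (2/((m : ℝ)*(1-t))) • (((2*m : ℝ))⁻¹ • Jmat (2*m)) :=
  statement_16_general m hm t ht1
end
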